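/- For all integers n ≥ 1 and k ≥ 0, the number of Dyck paths of semilength n with all peaks at odd height and exactly k downsteps ending at ground level equals the number of Motzkin paths of length n that begin with a flatstep and have exactly k flatsteps at ground level. -/

import Mathlib

/-- A Dyck path: each step is +1 (upstep U) or -1 (downstep D), all partial sums
are nonnegative, and the total sum is 0. -/
def IsDyckPath (P : List ℤ) : Prop :=
  (∀ s ∈ P, s = 1 ∨ s = -1) ∧ (∀ k, 0 ≤ (P.take k).sum) ∧ P.sum = 0

/-- A Motzkin path: each step is +1 (U), 0 (F), or -1 (D), all partial sums
are nonnegative, and the total sum is 0. -/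
def IsMotzkinPath (M : List ℤ) : Prop :=
  (∀ s ∈ M, s = 1 ∨ s = 0 ∨ s = -1) ∧ (∀ k, 0 ≤ (M.take k).sum) ∧ M.sum = 0

/-- A peak at position `i`: an upstep at `i` immediately followed by a downstep. -/
def IsPeak (P : List ℤ) (i : ℕ) : Prop :=
  P[i]? = some 1 ∧ P[i + 1]? = some (-1)

/-- The height of the peak at position `i`: the level reached just after the upstep. -/
def peakHeight (P : List ℤ) (i : ℕ) : ℤ := (P.take (i + 1)).sum

/-- Every peak is at odd height; by convention the empty path has one peak at height 0
(so `AllPeaksOdd []` is false). -/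
def AllPeaksOdd (P : List ℤ) : Prop :=
  (P = [] → Odd (0 : ℤ)) ∧ ∀ i, IsPeak P i → Odd (peakHeight P i)

/-- Every peak is at even height; by convention the empty path has one peak at height 0. -/
def AllPeaksEven (P : List ℤ) : Prop :=
  (P = [] → Even (0 : ℤ)) ∧ ∀ i, IsPeak P i → Even (peakHeight P i)

/-- The Motzkin path has no flatstep at ground level. -/
def NoGroundFlat (M : List ℤ) : Prop :=
  ∀ i, M[i]? = some 0 → (M.take i).sum ≠ 0

/-- Replacement of a contiguous pair of Dyck steps by a Motzkin step:
(U,U) ↦ U, (D,U) ↦ F, (D,D) ↦ D. -/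
def pairStep (a b : ℤ) : ℤ :=
  if a = 1 ∧ b = 1 then 1
  else if a = -1 ∧ b = 1 then 0
  else if a = -1 ∧ b = -1 then -1
  else 0

/-- Split a list of steps into contiguous pairs and replace each pair via `pairStep`. -/
def pairContract (P : List ℤ) : List ℤ :=
  (List.range (P.length / 2)).map fun k => pairStep (P.getD (2 * k) 0) (P.getD (2 * k + 1) 0)

/-- The number of downsteps ending at ground level. -/
def groundDownCount (P : List ℤ) : ℕ :=
  ((Finset.range P.length).filter fun i =>
    P[i]? = some (-1) ∧ (P.take (i + 1)).sum = 0).card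

/-- The number of flatsteps at ground level. -/
def groundFlatCount (M : List ℤ) : ℕ :=
  ((Finset.range M.length).filter fun i =>
    M[i]? = some 0 ∧ (M.take i).sum = 0).card

/-- The number of peaks. -/
def peakCount (P : List ℤ) : ℕ :=
  ((Finset.range P.length).filter fun i =>
    P[i]? = some 1 ∧ P[i + 1]? = some (-1)).card

/-- The number of occurrences of an upstep immediately followed by an upstep. -/
def uuCount (M : List ℤ) : ℕ :=
  ((Finset.range M.length).filter fun i =>
    M[i]? = some 1 ∧ M[i + 1]? = some 1).card

/-- The number of occurrences of a flatstep immediately followed by an upstep. -/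
def fuCount (M : List ℤ) : ℕ :=
  ((Finset.range M.length).filter fun i =>
    M[i]? = some 0 ∧ M[i + 1]? = some 1).card

namespace OddPeaksAux

/-! ### Expansion and contraction maps -/

def expandStep (s : ℤ) : List ℤ := if s = 1 then [1,1] else if s = 0 then [-1,1] else [-1,-1]

def expand (M : List ℤ) : List ℤ := M.flatMap expandStep

def gMap (M : List ℤ) : List ℤ := (expand M).drop 1 ++ [-1]

def contract : List ℤ → List ℤ
  | a :: b :: rest => pairStep a b :: contract rest
  | _ => []

lemma length_expandStep (s : ℤ) : (expandStep s).length = 2 := by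
  unfold expandStep; split_ifs <;> rfl

lemma mem_expandStep {x s : ℤ} (h : x ∈ expandStep s) : x = 1 ∨ x = -1 := by
  unfold expandStep at h; split_ifs at h <;> simp at h <;> tauto

lemma expand_cons (a : ℤ) (t : List ℤ) : expand (a :: t) = expandStep a ++ expand t := rfl

lemma length_expand (M : List ℤ) : (expand M).length = 2 * M.length := by
  induction M with
  | nil => rfl
  | cons a t ih => simp [expand_cons, length_expandStep, ih]; ring

lemma mem_expand {x : ℤ} {M : List ℤ} (h : x ∈ expand M) : x = 1 ∨ x = -1 := by
  induction M with
  | nil => simp [expand] at h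
  | cons a t ih =>
    rw [expand_cons, List.mem_append] at h
    rcases h with h | h
    · exact mem_expandStep h
    · exact ih h

lemma sum_expandStep {s : ℤ} (h : s = 1 ∨ s = 0 ∨ s = -1) : (expandStep s).sum = 2 * s := by
  rcases h with h | h | h <;> simp [h, expandStep]

lemma sum_expand {M : List ℤ} (h : ∀ s ∈ M, s = 1 ∨ s = 0 ∨ s = -1) :
    (expand M).sum = 2 * M.sum := by
  induction M with
  | nil => rfl
  | cons a t ih =>
    rw [expand_cons, List.sum_append, sum_expandStep (h a (by simp)),
      ih (fun s hs => h s (by simp [hs])), List.sum_cons]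
    ring

lemma expand_append (A B : List ℤ) : expand (A ++ B) = expand A ++ expand B := by
  simp [expand]

lemma expand_take (M : List ℤ) (j : ℕ) : (expand M).take (2 * j) = expand (M.take j) := by
  rcases le_or_gt j M.length with hj | hj
  · conv_lhs => rw [← List.take_append_drop j M, expand_append]
    rw [List.take_append_of_le_length (by rw [length_expand, List.length_take]; omega),
      List.take_of_length_le (by rw [length_expand, List.length_take]; omega)]
  · rw [List.take_of_length_le (by rw [length_expand]; omega),
      List.take_of_length_le (by omega)]

lemma sum_take_expand {M : List ℤ} (h : ∀ s ∈ M, s = 1 ∨ s = 0 ∨ s = -1) (j : ℕ) :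
    ((expand M).take (2 * j)).sum = 2 * (M.take j).sum := by
  rw [expand_take, sum_expand (fun s hs => h s (List.mem_of_mem_take hs))]

/-! ### General list helpers -/

lemma get?_eq_some_getD {L : List ℤ} {i : ℕ} (h : i < L.length) : L[i]? = some (L.getD i 0) := by
  rw [List.getD_eq_getElem?_getD]
  simp [List.getElem?_eq_getElem h]

lemma sum_take_succ_getD (L : List ℤ) (i : ℕ) (h : i < L.length) :
    (L.take (i+1)).sum = (L.take i).sum + L.getD i 0 := by
  rw [List.sum_take_succ L i h, List.getD_eq_getElem?_getD, List.getElem?_eq_getElem h]; rfl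

lemma getD_mem {L : List ℤ} {i : ℕ} (h : i < L.length) : L.getD i 0 ∈ L := by
  rw [List.getD_eq_getElem?_getD, List.getElem?_eq_getElem h]
  exact List.getElem_mem h

lemma parity_sum_take {L : List ℤ} (h : ∀ s ∈ L, s = 1 ∨ s = -1) {j : ℕ} (hj : j ≤ L.length) :
    Even ((L.take j).sum - j) := by
  induction L generalizing j with
  | nil => simp at hj; simp [hj]
  | cons a t ih =>
    cases j with
    | zero => simp
    | succ m =>
      have hm : m ≤ t.length := by simpa using hj
      rcases ih (fun s hs => h s (by simp [hs])) hm with ⟨c, hc⟩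
      rcases h a (by simp) with ha | ha
      · exact ⟨c, by simp [ha]; push_cast; linarith⟩
      · exact ⟨c - 1, by simp [ha]; push_cast; linarith⟩

lemma get?_expand {M : List ℤ} (h : ∀ s ∈ M, s = 1 ∨ s = 0 ∨ s = -1) {j : ℕ} (hj : j < M.length) :
    (expand M)[(2*j)]? = some (if M.getD j 0 = 1 then 1 else -1) ∧
    (expand M)[(2*j+1)]? = some (if M.getD j 0 = -1 then -1 else 1) := by
  induction M generalizing j with
  | nil => simp at hj
  | cons a t ih =>
    rw [expand_cons]
    cases j with
    | zero =>
      rw [mul_zero, List.getElem?_append_left (by rw [length_expandStep]; omega),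
        List.getElem?_append_left (by rw [length_expandStep]; omega)]
      rcases h a (by simp) with ha | ha | ha <;> simp [ha, expandStep]
    | succ m =>
      have hm : m < t.length := by simpa using hj
      have e1 : 2 * (m+1) = (expandStep a).length + 2*m := by rw [length_expandStep]; ring
      have e2 : 2 * (m+1) + 1 = (expandStep a).length + (2*m+1) := by rw [length_expandStep]; ring
      constructor
      · rw [e1, List.getElem?_append_right (by omega)]
        simpa using (ih (fun s hs => h s (by simp [hs])) hm).1
      · rw [e2, List.getElem?_append_right (by omega)]
        simpa using (ih (fun s hs => h s (by simp [hs])) hm).2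

/-! ### Contraction lemmas -/

lemma mem_contract {x : ℤ} {Q : List ℤ} (h : x ∈ contract Q) : x = 1 ∨ x = 0 ∨ x = -1 := by
  induction Q using contract.induct with
  | case1 a b r ih =>
    rw [contract] at h
    rcases List.mem_cons.mp h with h | h
    · unfold pairStep at h; split_ifs at h <;> tauto
    · exact ih h
  | case2 q h2 =>
    cases q with
    | nil => simp [contract] at h
    | cons a t =>
      cases t with
      | nil => simp [contract] at h
      | cons b r => exact absurd rfl (h2 a b r)

lemma expand_contract {Q : List ℤ} (he : ∀ s ∈ Q, s = 1 ∨ s = -1)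
    (hl : ∃ m, Q.length = 2 * m)
    (hp : ∀ k, Q[(2*k)]? = some 1 → Q[(2*k+1)]? = some 1) :
    expand (contract Q) = Q := by
  induction Q using contract.induct with
  | case1 a b r ih =>
    rw [contract, expand_cons]
    have hab : expandStep (pairStep a b) = [a, b] := by
      rcases he a (by simp) with ha | ha
      · have hb : b = 1 := by simpa using hp 0 (by simp [ha])
        simp [ha, hb, pairStep, expandStep]
      · rcases he b (by simp) with hb | hb <;> simp [ha, hb, pairStep, expandStep]
    rw [hab, ih (fun s hs => he s (by simp [hs]))
      (by obtain ⟨m, hm⟩ := hl; exact ⟨m - 1, by simp at hm ⊢; omega⟩)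
      (fun k hk => hp (k+1) (by simpa [Nat.mul_add] using hk))]
    rfl
  | case2 q h2 =>
    cases q with
    | nil => rfl
    | cons a t =>
      cases t with
      | nil => obtain ⟨m, hm⟩ := hl; simp at hm; omega
      | cons b r => exact absurd rfl (h2 a b r)

lemma contract_expand {M : List ℤ} (h : ∀ s ∈ M, s = 1 ∨ s = 0 ∨ s = -1) :
    contract (expand M) = M := by
  induction M with
  | nil => rfl
  | cons a t ih =>
    rw [expand_cons]
    rcases h a (by simp) with ha | ha | ha <;>
      · simp only [ha, expandStep]
        norm_num [contract, pairStep]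
        exact ih (fun s hs => h s (by simp [hs]))


/-! ### Core facts about `gMap M` for Motzkin `M` starting with a flat step -/

lemma head_cons {M : List ℤ} (hhead : M.head? = some 0) : ∃ t, M = 0 :: t := by
  cases M with
  | nil => simp at hhead
  | cons a t => simp at hhead; exact ⟨t, by rw [hhead]⟩

lemma expand_eq_cons {M : List ℤ} (hhead : M.head? = some 0) :
    expand M = -1 :: (expand M).drop 1 := by
  obtain ⟨t, rfl⟩ := head_cons hhead
  rw [expand_cons]
  norm_num [expandStep]

lemma length_gMap {M : List ℤ} (hhead : M.head? = some 0) :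
    (gMap M).length = 2 * M.length := by
  obtain ⟨t, rfl⟩ := head_cons hhead
  simp [gMap, length_expand]
  omega

lemma get?_gMap_lt {M : List ℤ} (hhead : M.head? = some 0) {i : ℕ}
    (hi : i < 2 * M.length - 1) :
    (gMap M)[i]? = (expand M)[(i+1)]? := by
  have hD : ((expand M).drop 1).length = 2 * M.length - 1 := by
    simp [length_expand]
  rw [gMap, List.getElem?_append_left (by omega)]
  conv_rhs => rw [expand_eq_cons hhead]
  simp

lemma get?_gMap_last {M : List ℤ} (hhead : M.head? = some 0) :
    (gMap M)[(2 * M.length - 1)]? = some (-1) := by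
  have hD : ((expand M).drop 1).length = 2 * M.length - 1 := by
    simp [length_expand]
  rw [gMap, List.getElem?_append_right (by omega)]
  simp [List.length_drop, length_expand]

lemma sum_take_gMap {M : List ℤ} (hhead : M.head? = some 0) {j : ℕ}
    (hj : j ≤ 2 * M.length - 1) :
    ((gMap M).take j).sum = ((expand M).take (j+1)).sum + 1 := by
  have hD : ((expand M).drop 1).length = 2 * M.length - 1 := by
    simp [length_expand]
  rw [gMap, List.take_append_of_le_length (by omega)]
  conv_rhs => rw [expand_eq_cons hhead]
  rw [List.take_succ_cons, List.sum_cons]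
  ring

lemma sum_gMap {M : List ℤ} (hent : ∀ s ∈ M, s = 1 ∨ s = 0 ∨ s = -1)
    (hsum : M.sum = 0) (hhead : M.head? = some 0) : (gMap M).sum = 0 := by
  have h1 : (expand M).sum = 0 := by rw [sum_expand hent, hsum]; ring
  have h2 : (expand M).sum = -1 + ((expand M).drop 1).sum := by
    conv_lhs => rw [expand_eq_cons hhead]
    simp
  have h3 : ((expand M).drop 1).sum = 1 := by omega
  rw [gMap, List.sum_append, h3]
  norm_num

lemma mem_gMap {M : List ℤ} {s : ℤ} (hs : s ∈ gMap M) : s = 1 ∨ s = -1 := by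
  rw [gMap, List.mem_append] at hs
  rcases hs with hs | hs
  · exact mem_expand (List.drop_subset 1 _ hs)
  · simp at hs; right; exact hs

lemma sumE_lb {M : List ℤ} (hM : IsMotzkinPath M) (m : ℕ) :
    -1 ≤ ((expand M).take m).sum := by
  rcases Nat.even_or_odd m with ⟨j, hj⟩ | ⟨j, hj⟩
  · have : m = 2 * j := by omega
    rw [this, sum_take_expand hM.1]
    have := hM.2.1 j
    omega
  · rcases lt_or_ge (2*j) (expand M).length with hm | hm
    · have hstep : ((expand M).take (2*j+1)).sum
          = ((expand M).take (2*j)).sum + (expand M).getD (2*j) 0 :=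
        sum_take_succ_getD _ _ hm
      have hmem := mem_expand (getD_mem hm)
      rw [hj, hstep, sum_take_expand hM.1]
      have := hM.2.1 j
      rcases hmem with h | h <;> omega
    · rw [List.take_of_length_le (by omega), sum_expand hM.1, hM.2.2]
      norm_num

lemma isDyck_gMap {M : List ℤ} (hM : IsMotzkinPath M) (hhead : M.head? = some 0) :
    IsDyckPath (gMap M) := by
  refine ⟨fun s hs => mem_gMap hs, fun k => ?_, sum_gMap hM.1 hM.2.2 hhead⟩
  rcases le_or_gt k (2 * M.length - 1) with hk | hk
  · rw [sum_take_gMap hhead hk]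
    have := sumE_lb hM (k+1)
    omega
  · rw [List.take_of_length_le (by rw [length_gMap hhead]; omega),
      sum_gMap hM.1 hM.2.2 hhead]

lemma allPeaksOdd_gMap {M : List ℤ} (hM : IsMotzkinPath M) (hhead : M.head? = some 0) :
    AllPeaksOdd (gMap M) := by
  obtain ⟨t0, ht0⟩ := head_cons hhead
  have hne : gMap M ≠ [] := by
    intro h
    have := length_gMap hhead
    rw [h, ht0] at this
    simp at this
  constructor
  · intro h; exact absurd h hne
  · intro i ⟨h1, h2⟩
    obtain ⟨hi, -⟩ := List.getElem?_eq_some_iff.mp h1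
    rw [length_gMap hhead] at hi
    rcases Nat.even_or_odd i with ⟨c, hc⟩ | ⟨c, hc⟩
    · -- i even: height is odd by parity
      have hpar := parity_sum_take (fun s hs => mem_gMap hs)
        (j := i+1) (by rw [length_gMap hhead]; omega)
      unfold peakHeight
      have hodd : Odd ((i:ℤ)+1) := ⟨c, by push_cast; omega⟩
      have : ((gMap M).take (i+1)).sum
          = (((gMap M).take (i+1)).sum - ((i:ℤ)+1)) + ((i:ℤ)+1) := by ring
      rw [this]
      refine Even.add_odd ?_ hodd
      have : ((i:ℤ)+1) = ((i+1 : ℕ) : ℤ) := by push_cast; ring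
      rw [this]
      exact hpar
    · -- i odd: impossible
      exfalso
      rcases lt_or_ge i (2 * M.length - 1) with hlt | hge
      · rw [get?_gMap_lt hhead hlt] at h1
        have hi1 : i + 1 = 2 * (c+1) := by omega
        have hcM : c + 1 < M.length := by omega
        rw [hi1] at h1
        have hg := (get?_expand hM.1 hcM).1
        rw [h1] at hg
        have hMc : M.getD (c+1) 0 = 1 := by
          by_contra hMc
          rw [if_neg hMc] at hg
          simp at hg
        have hi2 : i + 1 < 2 * M.length - 1 := by omega
        rw [get?_gMap_lt hhead hi2] at h2
        have : i + 1 + 1 = 2 * (c+1) + 1 := by omega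
        rw [this] at h2
        have hg2 := (get?_expand hM.1 hcM).2
        rw [h2, hMc] at hg2
        norm_num at hg2
      · have : i = 2 * M.length - 1 := by omega
        have h2' : (gMap M)[(i+1)]? = none := by
          apply List.getElem?_eq_none_iff.mpr
          rw [length_gMap hhead]
          omega
        rw [h2'] at h2
        simp at h2


/-! ### Counting: ground downsteps vs ground flatsteps -/

lemma groundCount_gMap {M : List ℤ} (hM : IsMotzkinPath M) (hhead : M.head? = some 0)
    (hn : 1 ≤ M.length) :
    groundDownCount (gMap M) = groundFlatCount M := by
  have hElen : (expand M).length = 2 * M.length := length_expand M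
  have hget0 : M[0]? = some 0 := by
    obtain ⟨t, rfl⟩ := head_cons hhead; rfl
  -- characterization of ground downsteps of gMap M
  have claimA : ∀ i, (gMap M)[i]? = some (-1) → ((gMap M).take (i+1)).sum = 0 →
      i < 2 * M.length →
      (i = 2 * M.length - 1) ∨ (∃ j, 1 ≤ j ∧ j < M.length ∧ i = 2*j-1 ∧
        M[j]? = some 0 ∧ (M.take j).sum = 0) := by
    intro i h1 h2 hi
    have hpar := parity_sum_take (fun s hs => mem_gMap hs)
      (j := i+1) (by rw [length_gMap hhead]; omega)
    rw [h2] at hpar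
    have hiodd : ¬ Even i := by
      intro ⟨c, hc⟩
      rcases hpar with ⟨d, hd⟩
      omega
    obtain ⟨c, hc⟩ := Nat.not_even_iff_odd.mp hiodd
    -- i = 2c+1, set j := c+1
    rcases eq_or_lt_of_le (show i ≤ 2 * M.length - 1 by omega) with heq | hlt
    · left; exact heq
    · right
      have hcM : c + 1 < M.length := by omega
      have hgl : (gMap M)[i]? = (expand M)[2*(c+1)]? := by
        rw [get?_gMap_lt hhead (by omega)]
        congr 1
        omega
      rw [hgl] at h1
      have hgE := (get?_expand hM.1 hcM).1
      have hMne1 : M.getD (c+1) 0 ≠ 1 := by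
        intro hM1
        rw [hM1, if_pos rfl] at hgE
        rw [h1] at hgE
        norm_num at hgE
      have hEgetD : (expand M).getD (2*(c+1)) 0 = -1 := by
        have := get?_eq_some_getD (L := expand M) (i := 2*(c+1)) (by omega)
        rw [h1] at this
        exact (Option.some_injective _ this.symm)
      -- partial sum computation
      have hsumP : ((gMap M).take (i+1)).sum
          = ((expand M).take (2*(c+1)+1)).sum + 1 := by
        rw [sum_take_gMap hhead (by omega), show i+1+1 = 2*(c+1)+1 from by omega]
      have hsumE : ((expand M).take (2*(c+1)+1)).sum
          = ((expand M).take (2*(c+1))).sum + (expand M).getD (2*(c+1)) 0 :=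
        sum_take_succ_getD _ _ (by omega)
      have hsum2 : ((expand M).take (2*(c+1))).sum = 2 * (M.take (c+1)).sum :=
        sum_take_expand hM.1 _
      have hMsum0 : (M.take (c+1)).sum = 0 := by
        rw [hsumP, hsumE, hsum2, hEgetD] at h2
        omega
      have hMne2 : M.getD (c+1) 0 ≠ -1 := by
        intro hM1
        have hstep := sum_take_succ_getD M (c+1) hcM
        have hpos := hM.2.1 (c+1+1)
        rw [hMsum0, hM1] at hstep
        omega
      have hM0 : M.getD (c+1) 0 = 0 := by
        rcases hM.1 _ (getD_mem hcM) with h | h | h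
        · exact absurd h hMne1
        · exact h
        · exact absurd h hMne2
      exact ⟨c+1, by omega, hcM, by omega,
        by rw [get?_eq_some_getD hcM, hM0], hMsum0⟩
  -- membership of backward images
  have claimB0 : (gMap M)[(2*M.length-1)]? = some (-1) ∧
      ((gMap M).take (2*M.length-1+1)).sum = 0 := by
    refine ⟨get?_gMap_last hhead, ?_⟩
    rw [show 2*M.length-1+1 = 2*M.length by omega,
      List.take_of_length_le (by rw [length_gMap hhead]),
      sum_gMap hM.1 hM.2.2 hhead]
  have claimB1 : ∀ j, 1 ≤ j → j < M.length → M[j]? = some 0 → (M.take j).sum = 0 →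
      (gMap M)[(2*j-1)]? = some (-1) ∧ ((gMap M).take (2*j-1+1)).sum = 0 := by
    intro j hj1 hjL hMj hMs
    have hMgetD : M.getD j 0 = 0 := by
      have := get?_eq_some_getD (L := M) (i := j) hjL
      rw [hMj] at this
      exact (Option.some_injective _ this.symm)
    have hgE := (get?_expand hM.1 hjL).1
    rw [hMgetD, if_neg (by norm_num)] at hgE
    have hgl : (gMap M)[(2*j-1)]? = (expand M)[(2*j)]? := by
      rw [get?_gMap_lt hhead (by omega)]
      congr 1
      omega
    have hEgetD : (expand M).getD (2*j) 0 = -1 := by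
      have := get?_eq_some_getD (L := expand M) (i := 2*j) (by omega)
      rw [hgE] at this
      exact (Option.some_injective _ this.symm)
    refine ⟨by rw [hgl, hgE], ?_⟩
    rw [show 2*j-1+1 = 2*j by omega, sum_take_gMap hhead (by omega),
      show 2*j+1 = 2*j+1 from rfl, sum_take_succ_getD _ _ (show 2*j < (expand M).length by omega),
      sum_take_expand hM.1, hEgetD, hMs]
    ring
  unfold groundDownCount groundFlatCount
  rw [length_gMap hhead]
  refine Finset.card_bij' (fun i _ => ((i+1)/2) % M.length)
    (fun j _ => if j = 0 then 2*M.length-1 else 2*j-1) ?_ ?_ ?_ ?_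
  · -- forward maps into target
    intro i hi
    rw [Finset.mem_filter, Finset.mem_range] at hi
    obtain ⟨hir, h1, h2⟩ := hi
    rw [Finset.mem_filter, Finset.mem_range]
    rcases claimA i h1 h2 hir with heq | ⟨j, hj1, hjL, hij, hMj, hMs⟩
    · have hkey : ((i+1)/2) % M.length = 0 := by
        rw [heq, show (2*M.length-1+1)/2 = M.length from by omega, Nat.mod_self]
      beta_reduce
      rw [hkey]
      exact ⟨by omega, hget0, by simp⟩
    · have hkey : ((i+1)/2) % M.length = j := by
        rw [hij, show (2*j-1+1)/2 = j from by omega, Nat.mod_eq_of_lt hjL]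
      beta_reduce
      rw [hkey]
      exact ⟨hjL, hMj, hMs⟩
  · -- backward maps into source
    intro j hj
    rw [Finset.mem_filter, Finset.mem_range] at hj
    obtain ⟨hjr, h1, h2⟩ := hj
    rw [Finset.mem_filter, Finset.mem_range]
    beta_reduce
    by_cases hj0 : j = 0
    · rw [if_pos hj0]
      exact ⟨by omega, claimB0.1, claimB0.2⟩
    · rw [if_neg hj0]
      have := claimB1 j (by omega) hjr h1 h2
      exact ⟨by omega, this.1, this.2⟩
  · -- left inverse
    intro i hi
    rw [Finset.mem_filter, Finset.mem_range] at hi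
    obtain ⟨hir, h1, h2⟩ := hi
    rcases claimA i h1 h2 hir with heq | ⟨j, hj1, hjL, hij, -, -⟩
    · have hkey : ((i+1)/2) % M.length = 0 := by
        rw [heq, show (2*M.length-1+1)/2 = M.length from by omega, Nat.mod_self]
      beta_reduce
      rw [hkey, if_pos rfl]
      omega
    · have hkey : ((i+1)/2) % M.length = j := by
        rw [hij, show (2*j-1+1)/2 = j from by omega, Nat.mod_eq_of_lt hjL]
      beta_reduce
      rw [hkey, if_neg (by omega)]
      omega
  · -- right inverse
    intro j hj
    rw [Finset.mem_filter, Finset.mem_range] at hj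
    obtain ⟨hjr, -, -⟩ := hj
    beta_reduce
    by_cases hj0 : j = 0
    · rw [if_pos hj0, show (2*M.length-1+1)/2 = M.length from by omega, Nat.mod_self, hj0]
    · rw [if_neg hj0, show (2*j-1+1)/2 = j from by omega, Nat.mod_eq_of_lt hjr]


/-! ### From a Dyck path with all peaks odd to a Motzkin path -/

lemma exists_preimage {n : ℕ} (hn : 1 ≤ n) {P : List ℤ} (hlen : P.length = 2*n)
    (hD : IsDyckPath P) (hodd : AllPeaksOdd P) :
    ∃ M : List ℤ, M.length = n ∧ IsMotzkinPath M ∧ M.head? = some 0 ∧ gMap M = P := by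
  obtain ⟨hent, hnn, hsum⟩ := hD
  -- the last step of P is a downstep, and the partial sum before it is 1
  have hlast : P.getD (2*n-1) 0 = -1 ∧ (P.take (2*n-1)).sum = 1 := by
    have hstep := sum_take_succ_getD P (2*n-1) (by omega)
    rw [show 2*n-1+1 = 2*n from by omega,
      List.take_of_length_le (show P.length ≤ 2*n by omega), hsum] at hstep
    have h0 := hnn (2*n-1)
    rcases hent _ (getD_mem (L := P) (show 2*n-1 < P.length by omega)) with h | h <;> omega
  -- P = P.dropLast ++ [-1]
  have hPsplit : P.dropLast ++ [(-1 : ℤ)] = P := by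
    have hne : P ≠ [] := by intro h; rw [h] at hlen; simp at hlen; omega
    have hq := List.dropLast_append_getLast hne
    rw [List.getLast_eq_getElem hne] at hq
    have hg : P[P.length - 1]'(by omega) = -1 := by
      have h2 := get?_eq_some_getD (L := P) (i := 2*n-1) (by omega)
      rw [hlast.1] at h2
      have hidx : P.length - 1 = 2*n-1 := by omega
      rw [← hidx] at h2
      have h3 : P[(P.length - 1)]? = some (P[P.length - 1]'(by omega)) := by
        rw [List.getElem?_eq_getElem (by omega)]
      rw [h2] at h3
      exact (Option.some_injective _ h3.symm)
    rw [hg] at hq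
    exact hq
  have hdll : P.dropLast.length = 2*n - 1 := by rw [List.length_dropLast, hlen]
  have hdlget : ∀ i, i < 2*n-1 → P.dropLast[i]? = P[i]? := by
    intro i hi
    rw [List.dropLast_eq_take, List.getElem?_take_of_lt (by omega)]
  have hdltake : ∀ j, j ≤ 2*n-1 → P.dropLast.take j = P.take j := by
    intro j hj
    rw [List.dropLast_eq_take, List.take_take, hlen, min_eq_left (by omega)]
  -- the doubled list Q
  set Q : List ℤ := (-1) :: P.dropLast with hQdef
  have hQlen : Q.length = 2*n := by rw [hQdef, List.length_cons, hdll]; omega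
  have hQent : ∀ s ∈ Q, s = 1 ∨ s = -1 := by
    intro s hs
    rcases List.mem_cons.mp hs with h | h
    · right; exact h
    · exact hent s (List.dropLast_subset _ h)
  have hQpair : ∀ c, Q[(2*c)]? = some 1 → Q[(2*c+1)]? = some 1 := by
    intro c hc
    have hc0 : c ≠ 0 := by
      intro h; rw [h] at hc; simp [hQdef] at hc
    -- Q[(2*c)]? = P[(2*c-1)]?
    have h2c : 2*c < 2*n := by
      by_contra h
      rw [List.getElem?_eq_none_iff.mpr (by omega)] at hc
      simp at hc
    have hQ2c : Q[(2*c)]? = P[(2*c-1)]? := by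
      rw [hQdef, show 2*c = (2*c-1)+1 from by omega, List.getElem?_cons_succ,
        hdlget _ (by omega)]
      congr 1
    have hQ2c1 : Q[(2*c+1)]? = P[(2*c)]? := by
      rw [hQdef, List.getElem?_cons_succ, hdlget _ (by omega)]
    rw [hQ2c] at hc
    rw [hQ2c1]
    have hPg := get?_eq_some_getD (L := P) (i := 2*c) (by omega)
    rcases hent _ (getD_mem (L := P) (show 2*c < P.length by omega)) with h | h
    · rw [hPg, h]
    · exfalso
      -- peak at odd position 2*c-1
      have hpk : IsPeak P (2*c-1) := by
        constructor
        · exact hc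
        · rw [show 2*c-1+1 = 2*c from by omega, hPg, h]
      have hoddh := hodd.2 _ hpk
      unfold peakHeight at hoddh
      rw [show 2*c-1+1 = 2*c from by omega] at hoddh
      have hpar := parity_sum_take hent (j := 2*c) (by omega)
      rcases hoddh with ⟨a, ha⟩
      rcases hpar with ⟨b, hb⟩
      omega
  -- define M
  have hEQ : expand (contract Q) = Q := expand_contract hQent ⟨n, hQlen⟩ hQpair
  have hMent : ∀ s ∈ contract Q, s = 1 ∨ s = 0 ∨ s = -1 := fun s hs => mem_contract hs
  have hMlen : (contract Q).length = n := by
    have := length_expand (contract Q)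
    rw [hEQ, hQlen] at this
    omega
  have hQtake : ∀ j, 1 ≤ j → j ≤ 2*n → (Q.take j).sum = -1 + (P.take (j-1)).sum := by
    intro j hj1 hj2
    rw [hQdef, show j = (j-1)+1 from by omega, List.take_succ_cons, List.sum_cons,
      hdltake (j-1) (by omega)]
    simp
  have hMtake : ∀ j, 2 * ((contract Q).take j).sum = (Q.take (2*j)).sum := by
    intro j
    conv_rhs => rw [← hEQ]
    rw [sum_take_expand hMent]
  have hMsumtot : (contract Q).sum = 0 := by
    have h1 := hMtake n
    rw [hQtake (2*n) (by omega) (by omega), hlast.2,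
      List.take_of_length_le (show (contract Q).length ≤ n by omega)] at h1
    omega
  have hMnn : ∀ j, 0 ≤ ((contract Q).take j).sum := by
    intro j
    rcases le_or_gt j n with hj | hj
    · rcases Nat.eq_zero_or_pos j with h0 | h0
      · simp [h0]
      · have h1 := hMtake j
        rw [hQtake (2*j) (by omega) (by omega)] at h1
        have hpar := parity_sum_take hent (j := 2*j-1) (by omega)
        have hge := hnn (2*j-1)
        have h2 : 2*j - 1 = 2*j-1 := rfl
        rcases hpar with ⟨b, hb⟩
        omega
    · rw [List.take_of_length_le (show (contract Q).length ≤ j by omega), hMsumtot]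
  have hMhead : (contract Q).head? = some 0 := by
    have hne : contract Q ≠ [] := by
      intro h; rw [h] at hMlen; simp at hMlen; omega
    have hg0 := (get?_expand hMent (j := 0) (by omega)).1
    rw [hEQ] at hg0
    have hQ0 : Q[0]? = some (-1) := by rw [hQdef]; rfl
    rw [mul_zero, hQ0] at hg0
    have hne1 : (contract Q).getD 0 0 ≠ 1 := by
      intro h
      rw [if_pos h] at hg0
      norm_num at hg0
    have hnem1 : (contract Q).getD 0 0 ≠ -1 := by
      intro h
      have hstep := sum_take_succ_getD (contract Q) 0 (by omega)
      have h1 := hMnn (0+1)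
      rw [h] at hstep
      simp only [List.take_zero, List.sum_nil] at hstep
      omega
    have h0 : (contract Q).getD 0 0 = 0 := by
      rcases hMent _ (getD_mem (L := contract Q) (i := 0) (by omega)) with h | h | h
      · exact absurd h hne1
      · exact h
      · exact absurd h hnem1
    cases hcq : contract Q with
    | nil => exact absurd hcq hne
    | cons a t =>
      rw [hcq] at h0
      simp at h0 ⊢
      exact h0
  refine ⟨contract Q, hMlen, ⟨hMent, hMnn, hMsumtot⟩, hMhead, ?_⟩
  rw [gMap, hEQ, hQdef]
  simpa using hPsplit


lemma expand_eq_of_gMap {M : List ℤ} (hhead : M.head? = some 0) :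
    expand M = -1 :: (gMap M).dropLast := by
  rw [gMap, List.dropLast_concat]
  exact expand_eq_cons hhead

end OddPeaksAux

open OddPeaksAux in
/-- For `n ≥ 1` and `k ≥ 0`, the number of Dyck paths of semilength `n` with all peaks at
odd height and exactly `k` downsteps ending at ground level equals the number of Motzkin
paths of length `n` beginning with a flatstep and having exactly `k` flatsteps at
ground level. -/
theorem odd_peaks_ground_down_eq_ground_flat (n k : ℕ) (hn : 1 ≤ n) :
    {P : List ℤ | P.length = 2 * n ∧ IsDyckPath P ∧ AllPeaksOdd P ∧
      groundDownCount P = k}.ncard =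
    {M : List ℤ | M.length = n ∧ IsMotzkinPath M ∧ M.head? = some 0 ∧
      groundFlatCount M = k}.ncard := by
  have hinj : Set.InjOn gMap {M : List ℤ | M.length = n ∧ IsMotzkinPath M ∧
      M.head? = some 0 ∧ groundFlatCount M = k} := by
    intro M hM M' hM' hEq
    have h1 : expand M = expand M' := by
      rw [expand_eq_of_gMap hM.2.2.1, expand_eq_of_gMap hM'.2.2.1, hEq]
    rw [← contract_expand hM.2.1.1, ← contract_expand hM'.2.1.1, h1]
  have himg : {P : List ℤ | P.length = 2 * n ∧ IsDyckPath P ∧ AllPeaksOdd P ∧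
      groundDownCount P = k} = gMap '' {M : List ℤ | M.length = n ∧ IsMotzkinPath M ∧
      M.head? = some 0 ∧ groundFlatCount M = k} := by
    ext P
    constructor
    · rintro ⟨hPlen, hPd, hPodd, hPk⟩
      obtain ⟨M, hMlen, hMmot, hMhead, hgP⟩ := exists_preimage hn hPlen hPd hPodd
      refine ⟨M, ⟨hMlen, hMmot, hMhead, ?_⟩, hgP⟩
      have hc := groundCount_gMap hMmot hMhead (by rw [hMlen]; omega)
      rw [hgP, hPk] at hc
      exact hc.symm
    · rintro ⟨M, ⟨hMlen, hMmot, hMhead, hMk⟩, rfl⟩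
      refine ⟨by rw [length_gMap hMhead, hMlen], isDyck_gMap hMmot hMhead,
        allPeaksOdd_gMap hMmot hMhead, ?_⟩
      rw [groundCount_gMap hMmot hMhead (by rw [hMlen]; omega), hMk]
  rw [himg, Set.ncard_image_of_injOn hinj]
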